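/- Theorem 1.1: If (X, 𝓔_v) is a rooted tree and Φ : X → {nonempty compact subsets of ℝ^d} satisfies (A1) and (A2), then the augmented tree (X, 𝓔) with 𝓔 = 𝓔_v ∪ 𝓔_h is Gromov hyperbolic: there exists δ ≥ 0 such that |x ∧ y| ≥ min(|x ∧ z|, |z ∧ y|) − δ for all x, y, z ∈ X. -/

import Mathlib

open Metric Filter

namespace HypIFS

/-- A rooted tree: a connected, locally finite simple graph with no cycles
and a distinguished root. -/
structure RootedTree (X : Type*) where
  G : SimpleGraph X
  isTree : G.IsTree
  locFin : ∀ x : X, {y | G.Adj x y}.Finite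
  root : X

variable {X : Type*}

/-- the level `|x|` of a vertex: graph distance from the root. -/
noncomputable def lvl (T : RootedTree X) (x : X) : ℕ := T.G.dist T.root x

/-- `p` is the parent `x⁻¹` of `x`. -/
def IsParent (T : RootedTree X) (p x : X) : Prop :=
  T.G.Adj p x ∧ lvl T p + 1 = lvl T x

/-- The graph `(X, 𝓔_v ∪ 𝓔_h)`. -/
def augGraph (T : RootedTree X) (Eh : X → X → Prop) : SimpleGraph X where
  Adj x y := (T.G.Adj x y ∨ Eh x y ∨ Eh y x) ∧ x ≠ y
  symm := by
    constructor
    rintro x y ⟨h1 | h2 | h3, hne⟩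
    · exact ⟨Or.inl h1.symm, hne.symm⟩
    · exact ⟨Or.inr (Or.inr h2), hne.symm⟩
    · exact ⟨Or.inr (Or.inl h3), hne.symm⟩
  loopless := ⟨fun x h => h.2 rfl⟩

/-- The Gromov product `|x ∧ y| = ½(|x| + |y| − d(x,y))` with respect to a root `o`. -/
noncomputable def gprod {V : Type*} (G : SimpleGraph V) (o x y : V) : ℝ :=
  ((G.dist o x : ℝ) + (G.dist o y : ℝ) - (G.dist x y : ℝ)) / 2

/-- Gromov hyperbolicity of a graph with basepoint `o`. -/
def GromovHyperbolic {V : Type*} (G : SimpleGraph V) (o : V) : Prop :=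
  ∃ δ : ℝ, 0 ≤ δ ∧ ∀ x y z : V,
    min (gprod G o x z) (gprod G o z y) - δ ≤ gprod G o x y

/-- The distance `dist(A, B)` between two subsets of a metric space. -/
noncomputable def setDist {E : Type*} [PseudoMetricSpace E] (A B : Set E) : ℝ :=
  sInf (Set.image2 dist A B)

/-- The horizontal edge set `𝓔_h` induced by the set-valued map `Φ`:
`(x,y) ∈ 𝓔_h` iff `|x| = |y|`, `x ≠ y` and `dist(Φ(x), Φ(y)) ≤ κ r^{|x|}`. -/
def EhPhi {d : ℕ} (T : RootedTree X) (Φ : X → Set (EuclideanSpace ℝ (Fin d)))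
    (r κ : ℝ) (x y : X) : Prop :=
  lvl T x = lvl T y ∧ x ≠ y ∧ setDist (Φ x) (Φ y) ≤ κ * r ^ lvl T x

/-!
Write `D(x, y)` for the distance between `Φ x` and `Φ y`. The Gromov product is controlled by `D`
from both sides.

* If `D(x, y) ≤ κ rᵏ` with `k ≤ |x|, |y|`, the ancestors of `x` and `y` at level `k` coincide or
  are joined by a horizontal edge, so `(x|y) ≥ k - 1/2`.
* Conversely `D(x, y) ≤ C r^(x|y)`. Along a geodesic `w` from `x` to `y` whose lowest level `b`
  is at least `(x|y)`, each edge moves `Φ` by at most `(κ + δ₀) r^|wᵢ|`. Two vertices of the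
  geodesic at level `b + j` that are `q` steps apart therefore have `D ≤ (κ + δ₀) q rᵇ`, and the
  first point bounds `q` by `2 j + 2 log_{1/r} q + O(1)`. So only `O(j)` vertices of the geodesic
  lie at level `b + j`, and `∑ r^|wᵢ| = O(rᵇ)`.

Since `D(x, y) ≤ D(x, z) + diam Φ(z) + D(z, y)`, the two estimates give
`(x|y) ≥ min((x|z), (z|y)) - δ`.
-/

section SetDist

variable {E : Type*} [PseudoMetricSpace E] {A B C A' B' : Set E}

lemma setDist_le_dist {a b : E} (ha : a ∈ A) (hb : b ∈ B) : setDist A B ≤ dist a b :=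
  csInf_le ⟨0, by rintro _ ⟨a, -, b, -, rfl⟩; exact dist_nonneg⟩ ⟨a, ha, b, hb, rfl⟩

lemma setDist_nonpos_of_mem {a : E} (hA : a ∈ A) (hB : a ∈ B) : setDist A B ≤ 0 := by
  simpa using setDist_le_dist hA hB

lemma setDist_comm (A B : Set E) : setDist A B = setDist B A := by
  simp only [setDist, Set.image2_swap dist A, dist_comm]

lemma setDist_le_setDist_of_subset (hA' : A'.Nonempty) (hB' : B'.Nonempty) (hA : A' ⊆ A)
    (hB : B' ⊆ B) : setDist A B ≤ setDist A' B' :=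
  le_csInf (hA'.image2 hB') <| by
    rintro _ ⟨a, ha, b, hb, rfl⟩
    exact setDist_le_dist (hA ha) (hB hb)

lemma setDist_le_add_diam_add (hA : A.Nonempty) (hB : B.Nonempty) (hC : C.Nonempty)
    (hBb : Bornology.IsBounded B) : setDist A C ≤ setDist A B + diam B + setDist B C := by
  refine le_of_forall_pos_le_add fun ε hε => ?_
  obtain ⟨_, ⟨a, ha, b, hb, rfl⟩, hab⟩ := Real.lt_sInf_add_pos (hA.image2 hB) (half_pos hε)
  obtain ⟨_, ⟨b', hb', c, hc, rfl⟩, hbc⟩ := Real.lt_sInf_add_pos (hB.image2 hC) (half_pos hε)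
  change dist a b < setDist A B + ε / 2 at hab
  change dist b' c < setDist B C + ε / 2 at hbc
  have := dist_le_diam_of_mem hBb hb hb'
  linarith [setDist_le_dist ha hc, dist_triangle4 a b b' c]

end SetDist

section Numeric

variable {t : ℝ}

lemma succ_mul_pow_le_inv_one_sub (h0 : 0 ≤ t) (h1 : t < 1) (a : ℕ) :
    (a + 1) * t ^ a ≤ (1 - t)⁻¹ :=
  calc (a + 1) * t ^ a = ∑ _i ∈ Finset.range (a + 1), t ^ a := by simp
    _ ≤ ∑ i ∈ Finset.range (a + 1), t ^ i := Finset.sum_le_sum fun i hi =>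
        pow_le_pow_of_le_one h0 h1.le (Nat.lt_succ_iff.mp (Finset.mem_range.mp hi))
    _ ≤ t ^ 0 / (1 - t) := by
        rw [Finset.range_eq_Ico]
        exact geom_sum_Ico_le_of_lt_one h0 h1
    _ = (1 - t)⁻¹ := by simp

lemma exists_forall_mul_mul_pow_div_add_le {c κ : ℝ} (hc : 0 < c) (hκ : 0 < κ) (h0 : 0 ≤ t)
    (h1 : t < 1) {k : ℕ} (hk : 0 < k) : ∃ M : ℕ, ∀ q : ℕ, c * q * t ^ (q / k + M) ≤ κ := by
  have hD : 0 < c * k * (1 - t)⁻¹ := by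
    have : 0 < 1 - t := by linarith
    positivity
  obtain ⟨M, hM⟩ := exists_pow_lt_of_lt_one (div_pos hκ hD) h1
  refine ⟨M, fun q => ?_⟩
  have hq : (q : ℝ) * t ^ (q / k) ≤ k * (1 - t)⁻¹ :=
    calc (q : ℝ) * t ^ (q / k) ≤ k * ((q / k : ℕ) + 1) * t ^ (q / k) := by
          gcongr
          exact_mod_cast (Nat.lt_mul_div_succ q hk).le
      _ ≤ k * (1 - t)⁻¹ := by
          rw [mul_assoc]
          gcongr
          exact succ_mul_pow_le_inv_one_sub h0 h1 _
  rw [lt_div_iff₀ hD] at hM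
  calc c * q * t ^ (q / k + M) = c * (q * t ^ (q / k)) * t ^ M := by ring
    _ ≤ c * (k * (1 - t)⁻¹) * t ^ M := by gcongr
    _ ≤ κ := by linarith

open Finset in
lemma sum_pow_le_tsum_of_card_le {ι : Type*} [DecidableEq ι] (s : Finset ι) (g : ι → ℕ)
    {A B : ℝ} (h0 : 0 ≤ t) (h1 : t < 1) (hcard : ∀ j : ℕ, (#{i ∈ s | g i = j} : ℝ) ≤ A * j + B) :
    ∑ i ∈ s, t ^ g i ≤ ∑' j : ℕ, (A * j + B) * t ^ j := by
  have hsum : Summable fun j : ℕ => (A * j + B) * t ^ j := by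
    have hj := (summable_pow_mul_geometric_of_norm_lt_one 1
      (by rwa [Real.norm_of_nonneg h0] : ‖t‖ < 1)).mul_left A
    simp only [pow_one] at hj
    exact (hj.add ((summable_geometric_of_lt_one h0 h1).mul_left B)).congr fun j => by ring
  calc ∑ i ∈ s, t ^ g i = ∑ j ∈ s.image g, #{i ∈ s | g i = j} * t ^ j := by
        rw [sum_comp (fun j => t ^ j) g]
        simp only [nsmul_eq_mul]
    _ ≤ ∑ j ∈ s.image g, (A * j + B) * t ^ j := by
        gcongr with j
        exact hcard j
    _ ≤ ∑' j : ℕ, (A * j + B) * t ^ j :=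
        hsum.sum_le_tsum _ fun j _ =>
          mul_nonneg ((Nat.cast_nonneg _).trans (hcard j)) (pow_nonneg h0 _)

lemma _root_.Finset.card_le_of_forall_sub_le {s : Finset ℕ} {L : ℕ}
    (h : ∀ a ∈ s, ∀ b ∈ s, a ≤ b → b - a ≤ L) : s.card ≤ L + 1 := by
  rcases s.eq_empty_or_nonempty with rfl | hs
  · simp
  have hL := h _ (s.min'_mem hs) _ (s.max'_mem hs) (s.min'_le _ (s.max'_mem hs))
  calc s.card ≤ (Finset.Icc (s.min' hs) (s.max' hs)).card :=
        Finset.card_le_card fun i hi => Finset.mem_Icc.2 ⟨s.min'_le _ hi, s.le_max' _ hi⟩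
    _ ≤ L + 1 := by
        rw [Nat.card_Icc]
        omega

end Numeric

section Graph

variable {V : Type*} {H : SimpleGraph V} {u v : V}

lemma _root_.SimpleGraph.Walk.apply_le_apply_add_length {f : V → ℕ}
    (hf : ∀ ⦃a b⦄, H.Adj a b → f b ≤ f a + 1) : ∀ {u v : V} (p : H.Walk u v), f v ≤ f u + p.length
  | _, _, .nil => by simp
  | _, _, .cons h p => by
    have := hf h
    have := p.apply_le_apply_add_length hf
    rw [SimpleGraph.Walk.length_cons]
    omega

lemma _root_.SimpleGraph.Walk.dist_getVert_le (p : H.Walk u v) {i j : ℕ} (hij : i ≤ j) :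
    H.dist (p.getVert i) (p.getVert j) ≤ j - i := by
  have := SimpleGraph.dist_le ((p.drop i).take (j - i))
  rw [SimpleGraph.Walk.take_length, SimpleGraph.Walk.drop_getVert, Nat.add_sub_cancel' hij]
    at this
  omega

lemma _root_.SimpleGraph.Walk.dist_getVert_eq (hH : H.Connected) {p : H.Walk u v}
    (hp : p.length = H.dist u v) {i j : ℕ} (hij : i ≤ j) (hj : j ≤ p.length) :
    H.dist (p.getVert i) (p.getVert j) = j - i := by
  have h₁ := p.dist_getVert_le (Nat.zero_le i)
  have h₂ := p.dist_getVert_le hj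
  rw [SimpleGraph.Walk.getVert_zero] at h₁
  rw [SimpleGraph.Walk.getVert_length] at h₂
  have := hH.dist_triangle (u := u) (v := p.getVert i) (w := v)
  have := hH.dist_triangle (u := p.getVert i) (v := p.getVert j) (w := v)
  have := p.dist_getVert_le hij
  omega

lemma gprod_nonneg (hH : H.Connected) (o x y : V) : 0 ≤ gprod H o x y := by
  have h := hH.dist_triangle (u := x) (v := o) (w := y)
  rw [SimpleGraph.dist_comm (u := x) (v := o)] at h
  have h' : (H.dist x y : ℝ) ≤ H.dist o x + H.dist o y := by exact_mod_cast h
  unfold gprod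
  linarith

lemma gprod_le_dist_left (hH : H.Connected) (o x y : V) : gprod H o x y ≤ H.dist o x := by
  have h' : (H.dist o y : ℝ) ≤ H.dist o x + H.dist x y := by exact_mod_cast hH.dist_triangle
  unfold gprod
  linarith

lemma gprod_le_dist_right (hH : H.Connected) (o x y : V) : gprod H o x y ≤ H.dist o y := by
  have h := hH.dist_triangle (u := o) (v := y) (w := x)
  rw [SimpleGraph.dist_comm (u := y)] at h
  have h' : (H.dist o x : ℝ) ≤ H.dist o y + H.dist x y := by exact_mod_cast h
  unfold gprod
  linarith

lemma gprod_le_dist_getVert (hH : H.Connected) (o : V) {x y : V} {p : H.Walk x y}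
    (hp : p.length = H.dist x y) {i : ℕ} (hi : i ≤ p.length) :
    gprod H o x y ≤ H.dist o (p.getVert i) := by
  have hx := hH.dist_triangle (u := o) (v := p.getVert i) (w := x)
  have hy := hH.dist_triangle (u := o) (v := p.getVert i) (w := y)
  have h₁ := p.dist_getVert_le (Nat.zero_le i)
  have h₂ := p.dist_getVert_le hi
  rw [SimpleGraph.Walk.getVert_zero, SimpleGraph.dist_comm] at h₁
  rw [SimpleGraph.Walk.getVert_length] at h₂
  have h : H.dist o x + H.dist o y ≤ 2 * H.dist o (p.getVert i) + H.dist x y := by omega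
  have h' : (H.dist o x : ℝ) + H.dist o y ≤ 2 * H.dist o (p.getVert i) + H.dist x y := by
    exact_mod_cast h
  unfold gprod
  linarith

end Graph

section Tree

variable {T : RootedTree X}

def IsAncestor (T : RootedTree X) : X → X → Prop := Relation.ReflTransGen (IsParent T)

lemma lvl_root : lvl T T.root = 0 := by
  simp [lvl]

lemma isParent_or_isParent_of_adj {u v : X} (h : T.G.Adj u v) :
    IsParent T u v ∨ IsParent T v u :=
  (T.isTree.dist_eq_dist_add_one_of_adj T.root h).symm.imp (fun e => ⟨h, e.symm⟩)
    (fun e => ⟨h.symm, e.symm⟩)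

lemma exists_isParent {x : X} (hx : x ≠ T.root) : ∃ p, IsParent T p x := by
  obtain ⟨W, hW⟩ := T.isTree.connected.exists_walk_length_eq_dist x T.root
  have hW₀ : ¬W.Nil := fun h => hx h.eq
  refine ⟨W.snd, (W.adj_snd hW₀).symm, ?_⟩
  have hsnd : lvl T W.snd ≤ W.tail.length := by
    simpa [lvl] using SimpleGraph.dist_le W.tail.reverse
  have hlen := W.length_tail_add_one hW₀
  rw [hW, SimpleGraph.dist_comm] at hlen
  change _ = lvl T x at hlen
  rcases isParent_or_isParent_of_adj (W.adj_snd hW₀) with h | h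
  · have := h.2
    omega
  · exact h.2

lemma exists_isAncestor_lvl_eq {k : ℕ} {x : X} (hk : k ≤ lvl T x) :
    ∃ a, lvl T a = k ∧ IsAncestor T a x := by
  obtain ⟨n, hn⟩ := Nat.exists_eq_add_of_le hk
  induction n generalizing x with
  | zero => exact ⟨x, by omega, .refl⟩
  | succ n ih =>
    obtain ⟨p, hp⟩ := exists_isParent (T := T) (x := x) (by rintro rfl; simp [lvl_root] at hn)
    obtain ⟨a, ha, hap⟩ := ih (x := p) (by have := hp.2; omega) (by have := hp.2; omega)
    exact ⟨a, ha, hap.tail hp⟩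

lemma IsAncestor.subset {E : Type*} {Φ : X → Set E} (hA1 : ∀ p x, IsParent T p x → Φ x ⊆ Φ p)
    {a x : X} (h : IsAncestor T a x) : Φ x ⊆ Φ a := by
  induction h with
  | refl => rfl
  | tail _ hp ih => exact (hA1 _ _ hp).trans ih

end Tree

section AugmentedTree

variable {T : RootedTree X} {Eh : X → X → Prop}

lemma tree_le_augGraph : T.G ≤ augGraph T Eh := fun _ _ h => ⟨Or.inl h, h.ne⟩

lemma augGraph_connected : (augGraph T Eh).Connected :=
  T.isTree.connected.mono tree_le_augGraph

lemma lvl_le_lvl_add_one_of_adj (hEh : ∀ ⦃x y⦄, Eh x y → lvl T x = lvl T y) {u v : X}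
    (h : (augGraph T Eh).Adj u v) : lvl T v ≤ lvl T u + 1 := by
  rcases h.1 with h | h | h
  · rcases isParent_or_isParent_of_adj h with hp | hp <;> have := hp.2 <;> omega
  · rw [hEh h]
    omega
  · rw [hEh h]
    omega

lemma dist_root_augGraph (hEh : ∀ ⦃x y⦄, Eh x y → lvl T x = lvl T y) (x : X) :
    (augGraph T Eh).dist T.root x = lvl T x := by
  refine le_antisymm ((T.isTree.connected.preconnected _ _).dist_anti tree_le_augGraph) ?_
  obtain ⟨W, hW⟩ := augGraph_connected.exists_walk_length_eq_dist T.root x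
  have := W.apply_le_apply_add_length fun _ _ h => lvl_le_lvl_add_one_of_adj hEh h
  rw [lvl_root] at this
  omega

lemma dist_augGraph_le_lvl_add_lvl (hEh : ∀ ⦃x y⦄, Eh x y → lvl T x = lvl T y) (x y : X) :
    (augGraph T Eh).dist x y ≤ lvl T x + lvl T y := by
  have := (augGraph_connected (T := T) (Eh := Eh)).dist_triangle (u := x) (v := T.root) (w := y)
  rwa [SimpleGraph.dist_comm (u := x) (v := T.root), dist_root_augGraph hEh,
    dist_root_augGraph hEh] at this

lemma IsAncestor.dist_augGraph_add_lvl_le {a x : X} (h : IsAncestor T a x) :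
    (augGraph T Eh).dist a x + lvl T a ≤ lvl T x := by
  induction h with
  | refl => simp
  | @tail p x _ hp ih =>
    have := (augGraph_connected (T := T) (Eh := Eh)).dist_triangle (u := a) (v := p) (w := x)
    have := SimpleGraph.dist_eq_one_iff_adj.2 (tree_le_augGraph (Eh := Eh) hp.1)
    have := hp.2
    omega

end AugmentedTree

section HorizontalEdges

variable {T : RootedTree X} {d : ℕ} {Φ : X → Set (EuclideanSpace ℝ (Fin d))} {r κ δ₀ : ℝ}

local notation "𝔸" => augGraph T (EhPhi T Φ r κ)

lemma setDist_le_of_adj (hκ : 0 ≤ κ) (hr : 0 ≤ r) (hΦne : ∀ x, (Φ x).Nonempty)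
    (hA1 : ∀ p x, IsParent T p x → Φ x ⊆ Φ p) {u v : X} (h : (𝔸).Adj u v) :
    setDist (Φ u) (Φ v) ≤ κ * r ^ lvl T u := by
  have hpos : 0 ≤ κ * r ^ lvl T u := by positivity
  rcases h.1 with h | h | h
  · obtain ⟨a, ha⟩ := hΦne v
    obtain ⟨b, hb⟩ := hΦne u
    rcases isParent_or_isParent_of_adj h with hp | hp
    · exact (setDist_nonpos_of_mem (hA1 _ _ hp ha) ha).trans hpos
    · exact (setDist_nonpos_of_mem hb (hA1 _ _ hp hb)).trans hpos
  · exact h.2.2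
  · rw [setDist_comm, ← h.1]
    exact h.2.2

lemma setDist_getVert_le (hκ : 0 ≤ κ) (hr : 0 ≤ r) (hΦc : ∀ x, IsCompact (Φ x))
    (hΦne : ∀ x, (Φ x).Nonempty) (hA1 : ∀ p x, IsParent T p x → Φ x ⊆ Φ p)
    (hdiam : ∀ x, diam (Φ x) ≤ δ₀ * r ^ lvl T x) {x y : X} (W : (𝔸).Walk x y) {i j : ℕ}
    (hij : i ≤ j) (hj : j ≤ W.length) :
    setDist (Φ (W.getVert i)) (Φ (W.getVert j)) ≤
      (κ + δ₀) * ∑ a ∈ Finset.Ico i j, r ^ lvl T (W.getVert a) := by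
  induction j, hij using Nat.le_induction with
  | base =>
    obtain ⟨a, ha⟩ := hΦne (W.getVert i)
    simpa using setDist_nonpos_of_mem ha ha
  | succ a hia ih =>
    have hadj := W.adj_getVert_succ (by omega : a < W.length)
    calc setDist (Φ (W.getVert i)) (Φ (W.getVert (a + 1)))
        ≤ setDist (Φ (W.getVert i)) (Φ (W.getVert a)) + diam (Φ (W.getVert a)) +
            setDist (Φ (W.getVert a)) (Φ (W.getVert (a + 1))) :=
          setDist_le_add_diam_add (hΦne _) (hΦne _) (hΦne _) (hΦc _).isBounded
      _ ≤ (κ + δ₀) * ∑ b ∈ Finset.Ico i a, r ^ lvl T (W.getVert b) +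
            δ₀ * r ^ lvl T (W.getVert a) + κ * r ^ lvl T (W.getVert a) := by
          gcongr
          exacts [ih (by omega), hdiam _, setDist_le_of_adj hκ hr hΦne hA1 hadj]
      _ = (κ + δ₀) * ∑ b ∈ Finset.Ico i (a + 1), r ^ lvl T (W.getVert b) := by
          rw [Finset.sum_Ico_succ_top hia]
          ring

lemma dist_augGraph_le_of_setDist_le (hΦne : ∀ x, (Φ x).Nonempty)
    (hA1 : ∀ p x, IsParent T p x → Φ x ⊆ Φ p) {x y : X} {k : ℕ} (hkx : k ≤ lvl T x)
    (hky : k ≤ lvl T y) (h : setDist (Φ x) (Φ y) ≤ κ * r ^ k) :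
    (𝔸).dist x y ≤ (lvl T x - k) + (lvl T y - k) + 1 := by
  obtain ⟨a, ha, hax⟩ := exists_isAncestor_lvl_eq hkx
  obtain ⟨b, hb, hby⟩ := exists_isAncestor_lvl_eq hky
  have hab : (𝔸).dist a b ≤ 1 := by
    by_cases heq : a = b
    · simp [heq]
    refine (SimpleGraph.dist_eq_one_iff_adj.2 (show (𝔸).Adj a b from
      ⟨Or.inr (Or.inl ⟨ha.trans hb.symm, heq, ?_⟩), heq⟩)).le
    rw [ha]
    exact (setDist_le_setDist_of_subset (hΦne x) (hΦne y) (hax.subset hA1) (hby.subset hA1)).trans h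
  have := hax.dist_augGraph_add_lvl_le (Eh := EhPhi T Φ r κ)
  have := hby.dist_augGraph_add_lvl_le (Eh := EhPhi T Φ r κ)
  have hconn : (𝔸).Connected := augGraph_connected
  have := hconn.dist_triangle (u := x) (v := a) (w := y)
  have := hconn.dist_triangle (u := a) (v := b) (w := y)
  have := SimpleGraph.dist_comm (G := 𝔸) (u := x) (v := a)
  omega

end HorizontalEdges

section Geodesics

variable {T : RootedTree X} {d : ℕ} {Φ : X → Set (EuclideanSpace ℝ (Fin d))} {r κ δ₀ : ℝ}

local notation "𝔸" => augGraph T (EhPhi T Φ r κ)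

open Finset

lemma sub_le_of_lvl_getVert_le (hκ : 0 < κ) (hr0 : 0 < r) (hr1 : r < 1) (hδ₀ : 0 ≤ δ₀)
    (hΦc : ∀ x, IsCompact (Φ x)) (hΦne : ∀ x, (Φ x).Nonempty)
    (hA1 : ∀ p x, IsParent T p x → Φ x ⊆ Φ p) (hdiam : ∀ x, diam (Φ x) ≤ δ₀ * r ^ lvl T x)
    {x y : X} {W : (𝔸).Walk x y} (hW : W.length = (𝔸).dist x y) {b : ℕ}
    (hb : ∀ a ≤ W.length, b ≤ lvl T (W.getVert a)) {i₁ i₂ j m : ℕ} (h₁₂ : i₁ ≤ i₂)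
    (h₂ : i₂ ≤ W.length) (hj₁ : lvl T (W.getVert i₁) ≤ b + j)
    (hj₂ : lvl T (W.getVert i₂) ≤ b + j) (hm : (κ + δ₀) * (i₂ - i₁ : ℕ) * r ^ m ≤ κ) :
    i₂ - i₁ ≤ 2 * j + 2 * m + 1 := by
  have hq := W.dist_getVert_eq augGraph_connected hW h₁₂ h₂
  have hsum : ∑ a ∈ Ico i₁ i₂, r ^ lvl T (W.getVert a) ≤ (i₂ - i₁ : ℕ) * r ^ b := by
    simpa using sum_le_card_nsmul (Ico i₁ i₂) (fun a => r ^ lvl T (W.getVert a)) (r ^ b)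
      fun a ha => pow_le_pow_of_le_one hr0.le hr1.le (hb a (by simp at ha; omega))
  have hset : setDist (Φ (W.getVert i₁)) (Φ (W.getVert i₂)) ≤
      (κ + δ₀) * (i₂ - i₁ : ℕ) * r ^ b :=
    calc _ ≤ _ := setDist_getVert_le hκ.le hr0.le hΦc hΦne hA1 hdiam W h₁₂ h₂
      _ ≤ _ := by
          rw [mul_assoc]
          gcongr
  rcases le_or_gt m b with hmb | hbm
  · have hk : setDist (Φ (W.getVert i₁)) (Φ (W.getVert i₂)) ≤ κ * r ^ (b - m) :=
      calc _ ≤ (κ + δ₀) * (i₂ - i₁ : ℕ) * r ^ m * r ^ (b - m) := by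
            rwa [mul_assoc _ (r ^ m), ← pow_add, Nat.add_sub_cancel' hmb]
        _ ≤ κ * r ^ (b - m) := by gcongr
    have := dist_augGraph_le_of_setDist_le hΦne hA1
      (le_trans (by omega) (hb i₁ (by omega))) (le_trans (by omega) (hb i₂ h₂)) hk
    omega
  · have := dist_augGraph_le_lvl_add_lvl (Eh := EhPhi T Φ r κ) (fun _ _ h => h.1)
      (W.getVert i₁) (W.getVert i₂)
    omega

lemma card_lvl_sub_eq_le (hκ : 0 < κ) (hr0 : 0 < r) (hr1 : r < 1) (hδ₀ : 0 ≤ δ₀)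
    (hΦc : ∀ x, IsCompact (Φ x)) (hΦne : ∀ x, (Φ x).Nonempty)
    (hA1 : ∀ p x, IsParent T p x → Φ x ⊆ Φ p) (hdiam : ∀ x, diam (Φ x) ≤ δ₀ * r ^ lvl T x)
    {M : ℕ} (hM : ∀ q : ℕ, (κ + δ₀) * q * r ^ (q / 4 + M) ≤ κ)
    {x y : X} {W : (𝔸).Walk x y} (hW : W.length = (𝔸).dist x y) {b : ℕ}
    (hb : ∀ a ≤ W.length, b ≤ lvl T (W.getVert a)) (j : ℕ) :
    #{i ∈ range W.length | lvl T (W.getVert i) - b = j} ≤ 4 * j + 4 * M + 3 := by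
  refine card_le_of_forall_sub_le fun i₁ hi₁ i₂ hi₂ h₁₂ => ?_
  simp only [mem_filter, mem_range] at hi₁ hi₂
  -- with `q = i₂ - i₁` and `m = q / 4 + M`, the bound `q ≤ 2j + 2m + 1` forces `q ≤ 4j + 4M + 2`
  have := sub_le_of_lvl_getVert_le hκ hr0 hr1 hδ₀ hΦc hΦne hA1 hdiam hW hb (j := j) h₁₂ hi₂.1.le
    (by omega) (by omega) (hM (i₂ - i₁))
  omega

lemma exists_setDist_le_mul_pow (hκ : 0 < κ) (hr0 : 0 < r) (hr1 : r < 1) (hδ₀ : 0 ≤ δ₀)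
    (hΦc : ∀ x, IsCompact (Φ x)) (hΦne : ∀ x, (Φ x).Nonempty)
    (hA1 : ∀ p x, IsParent T p x → Φ x ⊆ Φ p) (hdiam : ∀ x, diam (Φ x) ≤ δ₀ * r ^ lvl T x) :
    ∃ C, 0 ≤ C ∧ ∀ x y : X, ∀ m : ℕ, (m : ℝ) ≤ gprod 𝔸 T.root x y →
      setDist (Φ x) (Φ y) ≤ C * r ^ m := by
  obtain ⟨M, hM⟩ := exists_forall_mul_mul_pow_div_add_le (by linarith : 0 < κ + δ₀) hκ hr0.le hr1
    (by norm_num : 0 < 4)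
  set S := ∑' j : ℕ, (4 * j + (4 * M + 3 : ℝ)) * r ^ j
  have hS : 0 ≤ S := tsum_nonneg fun j => by positivity
  refine ⟨(κ + δ₀) * S, by positivity, fun x y m hm => ?_⟩
  have hconn : (𝔸).Connected := augGraph_connected
  obtain ⟨W, hW⟩ := hconn.exists_walk_length_eq_dist x y
  obtain ⟨i₀, hi₀, hmin⟩ := (range (W.length + 1)).exists_min_image
    (fun i => lvl T (W.getVert i)) nonempty_range_add_one
  set b := lvl T (W.getVert i₀)
  have hb : ∀ a ≤ W.length, b ≤ lvl T (W.getVert a) :=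
    fun a ha => hmin a (mem_range.2 (by omega))
  have hmb : m ≤ b := by
    have := gprod_le_dist_getVert hconn T.root hW (mem_range_succ_iff.1 hi₀)
    rw [dist_root_augGraph (Eh := EhPhi T Φ r κ) fun _ _ h => h.1] at this
    exact_mod_cast hm.trans this
  have hsum : ∑ a ∈ range W.length, r ^ lvl T (W.getVert a) ≤ S * r ^ b :=
    calc _ = (∑ a ∈ range W.length, r ^ (lvl T (W.getVert a) - b)) * r ^ b := by
          rw [sum_mul]
          refine sum_congr rfl fun a ha => ?_
          rw [← pow_add, Nat.sub_add_cancel (hb a (mem_range.1 ha).le)]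
      _ ≤ S * r ^ b := by
          gcongr
          refine sum_pow_le_tsum_of_card_le _ _ hr0.le hr1 fun j => ?_
          exact_mod_cast card_lvl_sub_eq_le hκ hr0 hr1 hδ₀ hΦc hΦne hA1 hdiam hM hW hb j
  calc setDist (Φ x) (Φ y)
      ≤ (κ + δ₀) * ∑ a ∈ range W.length, r ^ lvl T (W.getVert a) := by
        have := setDist_getVert_le hκ.le hr0.le hΦc hΦne hA1 hdiam W (Nat.zero_le _) le_rfl
        rwa [W.getVert_zero, W.getVert_length, ← range_eq_Ico] at this
    _ ≤ (κ + δ₀) * (S * r ^ b) := by gcongr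
    _ ≤ (κ + δ₀) * S * r ^ m := by
        rw [← mul_assoc]
        exact mul_le_mul_of_nonneg_left (pow_le_pow_of_le_one hr0.le hr1.le hmb) (by positivity)

end Geodesics

section Hyperbolicity

variable {T : RootedTree X} {d : ℕ} {Φ : X → Set (EuclideanSpace ℝ (Fin d))} {r κ δ₀ : ℝ}

local notation "𝔸" => augGraph T (EhPhi T Φ r κ)

lemma setDist_le_of_le_gprod_of_le_gprod (hr0 : 0 ≤ r) (hr1 : r ≤ 1) (hδ₀ : 0 ≤ δ₀)
    (hΦc : ∀ x, IsCompact (Φ x)) (hΦne : ∀ x, (Φ x).Nonempty)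
    (hdiam : ∀ x, diam (Φ x) ≤ δ₀ * r ^ lvl T x) {C : ℝ}
    (hC : ∀ x y : X, ∀ m : ℕ, (m : ℝ) ≤ gprod 𝔸 T.root x y → setDist (Φ x) (Φ y) ≤ C * r ^ m)
    {x y z : X} {m : ℕ} (hxz : (m : ℝ) ≤ gprod 𝔸 T.root x z) (hzy : (m : ℝ) ≤ gprod 𝔸 T.root z y) :
    setDist (Φ x) (Φ y) ≤ (2 * C + δ₀) * r ^ m := by
  have hmz : m ≤ lvl T z := by
    have := gprod_le_dist_left (augGraph_connected (T := T) (Eh := EhPhi T Φ r κ)) T.root z y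
    rw [dist_root_augGraph (Eh := EhPhi T Φ r κ) fun _ _ h => h.1] at this
    exact_mod_cast hzy.trans this
  have hz : δ₀ * r ^ lvl T z ≤ δ₀ * r ^ m :=
    mul_le_mul_of_nonneg_left (pow_le_pow_of_le_one hr0 hr1 hmz) hδ₀
  calc setDist (Φ x) (Φ y) ≤ setDist (Φ x) (Φ z) + diam (Φ z) + setDist (Φ z) (Φ y) :=
        setDist_le_add_diam_add (hΦne x) (hΦne z) (hΦne y) (hΦc z).isBounded
    _ ≤ C * r ^ m + δ₀ * r ^ m + C * r ^ m := by
        gcongr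
        exacts [hC x z m hxz, (hdiam z).trans hz, hC z y m hzy]
    _ = (2 * C + δ₀) * r ^ m := by ring

lemma sub_le_gprod_of_setDist_le (hr : 0 ≤ r) (hΦne : ∀ x, (Φ x).Nonempty)
    (hA1 : ∀ p x, IsParent T p x → Φ x ⊆ Φ p) {C : ℝ} {M : ℕ} (hM : C * r ^ M ≤ κ)
    {x y : X} {m : ℕ} (hmx : m ≤ lvl T x) (hmy : m ≤ lvl T y)
    (h : setDist (Φ x) (Φ y) ≤ C * r ^ m) : (m : ℝ) - M - 1 / 2 ≤ gprod 𝔸 T.root x y := by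
  rcases lt_or_ge m M with hmM | hMm
  · have := gprod_nonneg (augGraph_connected (T := T) (Eh := EhPhi T Φ r κ)) T.root x y
    have : (m : ℝ) + 1 ≤ M := by exact_mod_cast hmM
    linarith
  have hk : setDist (Φ x) (Φ y) ≤ κ * r ^ (m - M) :=
    calc setDist (Φ x) (Φ y) ≤ C * r ^ M * r ^ (m - M) := by
          rwa [mul_assoc, ← pow_add, Nat.add_sub_cancel' hMm]
      _ ≤ κ * r ^ (m - M) := by gcongr
  have hd := dist_augGraph_le_of_setDist_le hΦne hA1 (by omega) (by omega) hk
  have hd' : ((𝔸).dist x y : ℝ) + 2 * (m - M : ℕ) ≤ lvl T x + lvl T y + 1 := by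
    exact_mod_cast (by omega : (𝔸).dist x y + 2 * (m - M) ≤ lvl T x + lvl T y + 1)
  rw [Nat.cast_sub hMm] at hd'
  unfold gprod
  rw [dist_root_augGraph (Eh := EhPhi T Φ r κ) (fun _ _ h => h.1),
    dist_root_augGraph (Eh := EhPhi T Φ r κ) (fun _ _ h => h.1)]
  linarith

end Hyperbolicity

/-- Theorem 1.1: the augmented tree `(X, 𝓔_v ∪ 𝓔_h)` induced by a set-valued map
`Φ` satisfying (A1) and (A2) is Gromov hyperbolic. -/
theorem augmented_tree_hyperbolic {d : ℕ} (T : RootedTree X)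
    (Φ : X → Set (EuclideanSpace ℝ (Fin d))) (δ₀ r κ : ℝ)
    (hδ₀ : 1 < δ₀) (hr0 : 0 < r) (hr1 : r < 1) (hκ : 0 < κ)
    (hΦc : ∀ x, IsCompact (Φ x)) (hΦne : ∀ x, (Φ x).Nonempty)
    (hA1 : ∀ p x, IsParent T p x → Φ x ⊆ Φ p)
    (hA2 : ∀ x, δ₀⁻¹ * r ^ lvl T x ≤ diam (Φ x) ∧ diam (Φ x) ≤ δ₀ * r ^ lvl T x) :
    GromovHyperbolic (augGraph T (EhPhi T Φ r κ)) T.root := by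
  have hEh : ∀ ⦃x y⦄, EhPhi T Φ r κ x y → lvl T x = lvl T y := fun _ _ h => h.1
  have hconn := augGraph_connected (T := T) (Eh := EhPhi T Φ r κ)
  have hdiam : ∀ x, diam (Φ x) ≤ δ₀ * r ^ lvl T x := fun x => (hA2 x).2
  obtain ⟨C, hC0, hC⟩ := exists_setDist_le_mul_pow hκ hr0 hr1 (by linarith) hΦc hΦne hA1 hdiam
  obtain ⟨M, hM⟩ := exists_pow_lt_of_lt_one (div_pos hκ (by linarith : 0 < 2 * C + δ₀)) hr1
  rw [lt_div_iff₀' (by linarith)] at hM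
  refine ⟨M + 3 / 2, by positivity, fun x y z => ?_⟩
  set μ := min (gprod _ T.root x z) (gprod _ T.root z y)
  have hμ : 0 ≤ μ := le_min (gprod_nonneg hconn _ _ _) (gprod_nonneg hconn _ _ _)
  have hxz : (⌊μ⌋₊ : ℝ) ≤ gprod _ T.root x z := (Nat.floor_le hμ).trans (min_le_left _ _)
  have hzy : (⌊μ⌋₊ : ℝ) ≤ gprod _ T.root z y := (Nat.floor_le hμ).trans (min_le_right _ _)
  have hx : ⌊μ⌋₊ ≤ lvl T x := by
    exact_mod_cast hxz.trans (dist_root_augGraph hEh x ▸ gprod_le_dist_left hconn _ _ _)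
  have hy : ⌊μ⌋₊ ≤ lvl T y := by
    exact_mod_cast hzy.trans (dist_root_augGraph hEh y ▸ gprod_le_dist_right hconn _ _ _)
  have := sub_le_gprod_of_setDist_le hr0.le hΦne hA1 hM.le hx hy
    (setDist_le_of_le_gprod_of_le_gprod hr0.le hr1.le (by linarith) hΦc hΦne hdiam hC hxz hzy)
  linarith [Nat.lt_floor_add_one μ]

end HypIFS
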